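/- In any basic feasible solution of the relaxed allocation LP, the bipartite graph G′ whose vertices are flows and nodes and whose edges are pairs (f, v) with 0 < λ_f^v < λ_f contains no cycle; i.e., G′ is a forest. -/

import Mathlib

/-- Feasibility for the relaxed allocation LP. -/
def FeasAlloc {V F : Type} [Fintype V] [Fintype F] [DecidableEq V]
    (c : V → ℝ) (rate : F → ℝ) (path : F → Finset V) (U : Finset V)
    (a : F → V → ℝ) : Prop :=
  (∀ f v, 0 ≤ a f v) ∧
  (∀ f v, v ∉ path f ∩ U → a f v = 0) ∧
  (∀ v ∈ U, ∑ f, a f v ≤ c v) ∧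
  (∀ f, ∑ v, a f v ≤ rate f)

/-- The bipartite graph on flows and nodes whose edges are the pairs `(f,v)`
with a fractional assignment `0 < λ_f^v < λ_f`. -/
def fracGraph {V F : Type} (rate : F → ℝ) (a : F → V → ℝ) :
    SimpleGraph (F ⊕ V) :=
  SimpleGraph.fromRel (fun x y =>
    match x, y with
    | Sum.inl f, Sum.inr v => 0 < a f v ∧ a f v < rate f
    | _, _ => False)

/-!
A cycle of fractional edges carries a circulation: put `+ε` on the edges traversed from a
flow to a node and `-ε` on those traversed from a node to a flow. A closed walk enters every
vertex as often as it leaves it, so this perturbation `δ` preserves every row and column sum,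
and it is supported on edges with `0 < λ_f^v`. For `ε` at most the smallest positive entry,
both `λ + δ` and `λ - δ` are feasible with midpoint `λ`, so basicness forces `δ = 0`; but a
cycle is a trail, so each of its edges carries exactly `±ε`.
-/

open Finset Sum Filter Topology

theorem List.sum_count_pair_eq_count_map_fst {α β : Type*} [DecidableEq α] [DecidableEq β]
    [Fintype β] (l : List (α × β)) (a : α) :
    ∑ b, l.count (a, b) = (l.map Prod.fst).count a := by
  induction l with
  | nil => simp
  | cons p l ih =>
    obtain ⟨a', b'⟩ := p
    by_cases h : a' = a <;> simp [List.count_cons, sum_add_distrib, ih, Prod.ext_iff, h]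

theorem List.sum_count_pair_eq_count_map_snd {α β : Type*} [DecidableEq α] [DecidableEq β]
    [Fintype α] (l : List (α × β)) (b : β) :
    ∑ a, l.count (a, b) = (l.map Prod.snd).count b := by
  induction l with
  | nil => simp
  | cons p l ih =>
    obtain ⟨a', b'⟩ := p
    by_cases h : b' = b <;> simp [List.count_cons, sum_add_distrib, ih, Prod.ext_iff, h]

theorem exists_pos_le_of_pos {ι : Type*} [Finite ι] (g : ι → ℝ) :
    ∃ ε > 0, ∀ i, 0 < g i → ε ≤ g i := by
  have hsmall : ∀ i, ∀ᶠ ε in 𝓝[>] (0 : ℝ), 0 < g i → ε ≤ g i := fun i => by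
    by_cases hi : 0 < g i
    · filter_upwards [nhdsWithin_le_nhds (eventually_le_nhds hi)] with ε hε using fun _ => hε
    · exact Eventually.of_forall fun _ h => absurd h hi
  exact (eventually_mem_nhdsWithin.and (eventually_all.2 hsmall)).exists

namespace SimpleGraph.Walk

variable {α : Type*} {G : SimpleGraph α} {u v : α}

theorem perm_map_fst_darts_map_snd_darts (p : G.Walk u u) :
    (p.darts.map (·.fst)).Perm (p.darts.map (·.snd)) := by
  rw [← List.perm_cons u, cons_map_snd_darts, ← map_fst_darts_append]
  exact List.perm_append_comm (l₁ := [u])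

theorem IsTrail.swap_not_mem_map_toProd_darts {x y : α} {p : G.Walk u v} (hp : p.IsTrail)
    (h : (x, y) ∈ p.darts.map (·.toProd)) : (y, x) ∉ p.darts.map (·.toProd) := by
  intro h'
  obtain ⟨d, hd, hde⟩ := List.mem_map.mp h
  obtain ⟨d', hd', hd'e⟩ := List.mem_map.mp h'
  obtain rfl : d = d' := List.inj_on_of_nodup_map hp.edges_nodup hd hd' <| by
    rw [dart_edge_eq_mk'_iff.mpr (Or.inl hde), dart_edge_eq_mk'_iff.mpr (Or.inr hd'e)]
  obtain rfl : x = y := (Prod.ext_iff.mp (hde.symm.trans hd'e)).1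
  exact G.loopless.irrefl x (by simpa [hde] using d.adj)

variable [DecidableEq α]

def netFlow (p : G.Walk u v) (x y : α) : ℤ :=
  (p.darts.map (·.toProd)).count (x, y) - (p.darts.map (·.toProd)).count (y, x)

theorem netFlow_swap (p : G.Walk u v) (x y : α) : p.netFlow y x = -p.netFlow x y := by
  simp [netFlow]

theorem adj_of_netFlow_ne_zero {p : G.Walk u v} {x y : α} (h : p.netFlow x y ≠ 0) :
    G.Adj x y := by
  have hadj : ∀ {x y}, (x, y) ∈ p.darts.map (·.toProd) → G.Adj x y := by
    intro x y h
    obtain ⟨⟨⟨x', y'⟩, hadj⟩, -, hd⟩ := List.mem_map.mp h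
    obtain ⟨rfl, rfl⟩ := Prod.mk.inj hd
    exact hadj
  by_contra hxy
  apply h
  rw [netFlow, List.count_eq_zero_of_not_mem (hxy ∘ hadj),
    List.count_eq_zero_of_not_mem fun h => hxy (hadj h).symm]
  rfl

theorem IsTrail.netFlow_eq_one {p : G.Walk u v} (hp : p.IsTrail) {x y : α}
    (h : (x, y) ∈ p.darts.map (·.toProd)) : p.netFlow x y = 1 := by
  have hnodup : (p.darts.map (·.toProd)).Nodup :=
    (hp.edges_nodup.of_map _).map Dart.toProd_injective
  rw [netFlow, List.count_eq_one_of_mem hnodup h,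
    List.count_eq_zero_of_not_mem (hp.swap_not_mem_map_toProd_darts h)]
  rfl

theorem IsTrail.abs_netFlow_le_one {p : G.Walk u v} (hp : p.IsTrail) (x y : α) :
    |p.netFlow x y| ≤ 1 := by
  by_cases hxy : (x, y) ∈ p.darts.map (·.toProd)
  · simp [hp.netFlow_eq_one hxy]
  by_cases hyx : (y, x) ∈ p.darts.map (·.toProd)
  · rw [netFlow_swap p y x, hp.netFlow_eq_one hyx]
    simp
  simp [netFlow, List.count_eq_zero_of_not_mem hxy, List.count_eq_zero_of_not_mem hyx]

theorem IsTrail.exists_netFlow_eq_one {p : G.Walk u v} (hp : p.IsTrail) (hnil : ¬ p.Nil) :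
    ∃ x y, p.netFlow x y = 1 := by
  cases p with
  | nil => exact absurd Nil.nil hnil
  | @cons _ w _ _ _ => exact ⟨u, w, hp.netFlow_eq_one (by simp)⟩

-- A closed walk enters each vertex as often as it leaves it.
theorem sum_netFlow_eq_zero [Fintype α] (p : G.Walk u u) (x : α) :
    ∑ y, p.netFlow x y = 0 := by
  simp only [netFlow, sum_sub_distrib, ← Nat.cast_sum, List.sum_count_pair_eq_count_map_fst,
    List.sum_count_pair_eq_count_map_snd, List.map_map]
  exact sub_eq_zero.mpr (congrArg _ (p.perm_map_fst_darts_map_snd_darts.count_eq x))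

section Bipartite

variable {β γ : Type*} [DecidableEq β] [DecidableEq γ] {G : SimpleGraph (β ⊕ γ)} {x : β ⊕ γ}

theorem netFlow_inl_inl (hG : G ≤ completeBipartiteGraph β γ) (p : G.Walk x x) (b b' : β) :
    p.netFlow (inl b) (inl b') = 0 := by
  by_contra h
  simpa using hG (adj_of_netFlow_ne_zero h)

theorem netFlow_inr_inr (hG : G ≤ completeBipartiteGraph β γ) (p : G.Walk x x) (c c' : γ) :
    p.netFlow (inr c) (inr c') = 0 := by
  by_contra h
  simpa using hG (adj_of_netFlow_ne_zero h)

theorem IsTrail.exists_netFlow_inl_inr_ne_zero (hG : G ≤ completeBipartiteGraph β γ)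
    {p : G.Walk x x} (hp : p.IsTrail) (hnil : ¬ p.Nil) :
    ∃ b c, p.netFlow (inl b) (inr c) ≠ 0 := by
  obtain ⟨y, z, h⟩ := hp.exists_netFlow_eq_one hnil
  have hyz := hG (adj_of_netFlow_ne_zero (h ▸ one_ne_zero))
  rcases y with b | c <;> rcases z with b' | c' <;> simp at hyz
  · exact ⟨b, c', by simp [h]⟩
  · exact ⟨b', c, by simp [netFlow_swap p (inr c) (inl b'), h]⟩

variable [Fintype β] [Fintype γ]

theorem sum_netFlow_inl_inr_eq_zero_right (hG : G ≤ completeBipartiteGraph β γ)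
    (p : G.Walk x x) (b : β) : ∑ c, p.netFlow (inl b) (inr c) = 0 := by
  have := p.sum_netFlow_eq_zero (inl b)
  rwa [Fintype.sum_sum_type, sum_eq_zero fun b' _ => netFlow_inl_inl hG p b b', zero_add] at this

theorem sum_netFlow_inl_inr_eq_zero_left (hG : G ≤ completeBipartiteGraph β γ)
    (p : G.Walk x x) (c : γ) : ∑ b, p.netFlow (inl b) (inr c) = 0 := by
  have := p.sum_netFlow_eq_zero (inr c)
  rw [Fintype.sum_sum_type, sum_eq_zero fun c' _ => netFlow_inr_inr hG p c c', add_zero] at this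
  simp only [netFlow_swap p (inr c), sum_neg_distrib, this, neg_zero]

end Bipartite

end SimpleGraph.Walk

theorem fracGraph_adj_inl_inr {V F : Type} {rate : F → ℝ} {a : F → V → ℝ} {f : F} {v : V} :
    (fracGraph rate a).Adj (inl f) (inr v) ↔ 0 < a f v ∧ a f v < rate f := by
  simp [fracGraph]

theorem fracGraph_le_completeBipartiteGraph {V F : Type} (rate : F → ℝ) (a : F → V → ℝ) :
    fracGraph rate a ≤ completeBipartiteGraph F V := by
  rintro (f | v) (f' | v') h <;> simp_all [fracGraph]

section Allocation

variable {V F : Type} [Fintype V] [Fintype F] [DecidableEq V] {c : V → ℝ} {rate : F → ℝ}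
  {path : F → Finset V} {U : Finset V} {a δ : F → V → ℝ}

theorem FeasAlloc.add_of_abs_le (h : FeasAlloc c rate path U a)
    (hrow : ∀ f, ∑ v, δ f v = 0) (hcol : ∀ v, ∑ f, δ f v = 0) (hδ : ∀ f v, |δ f v| ≤ a f v) :
    FeasAlloc c rate path U (a + δ) := by
  obtain ⟨hnonneg, hsupp, hcap, hrate⟩ := h
  refine ⟨fun f v => ?_, fun f v hv => ?_, fun v hv => ?_, fun f => ?_⟩
  · simp only [Pi.add_apply]
    linarith [neg_abs_le (δ f v), hδ f v]
  · have hδ0 : δ f v = 0 := abs_nonpos_iff.mp (hsupp f v hv ▸ hδ f v)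
    simp [hsupp f v hv, hδ0]
  · simpa [sum_add_distrib, hcol v] using hcap v hv
  · simpa [sum_add_distrib, hrow f] using hrate f

theorem FeasAlloc.eq_zero_of_abs_le (hfeas : FeasAlloc c rate path U a)
    (hbasic : ∀ b₁ b₂ : F → V → ℝ, FeasAlloc c rate path U b₁ →
      FeasAlloc c rate path U b₂ → a = (fun f v => (b₁ f v + b₂ f v) / 2) → b₁ = b₂)
    (hrow : ∀ f, ∑ v, δ f v = 0) (hcol : ∀ v, ∑ f, δ f v = 0) (hδ : ∀ f v, |δ f v| ≤ a f v) :
    δ = 0 := by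
  have hplus := hfeas.add_of_abs_le hrow hcol hδ
  have hminus := hfeas.add_of_abs_le (δ := -δ) (by simpa using hrow) (by simpa using hcol)
    (by simpa using hδ)
  have heq := hbasic _ _ hplus hminus (by ext f v; simp; ring)
  ext f v
  have := congrFun₂ heq f v
  simp only [Pi.add_apply, Pi.neg_apply] at this
  simp only [Pi.zero_apply]
  linarith

end Allocation

/-- In any basic feasible solution of the relaxed allocation LP (a feasible
point that is not the midpoint of two distinct feasible points), the graph of
fractional edges contains no cycle, i.e. it is a forest. -/
theorem basic_solution_fracGraph_acyclic
    {V F : Type} [Fintype V] [Fintype F] [DecidableEq V]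
    (c : V → ℝ) (rate : F → ℝ) (path : F → Finset V) (U : Finset V)
    (a : F → V → ℝ)
    (hfeas : FeasAlloc c rate path U a)
    (hbasic : ∀ b₁ b₂ : F → V → ℝ, FeasAlloc c rate path U b₁ →
      FeasAlloc c rate path U b₂ →
      a = (fun f v => (b₁ f v + b₂ f v) / 2) → b₁ = b₂) :
    (fracGraph rate a).IsAcyclic := by
  classical
  intro x p hp
  have hG := fracGraph_le_completeBipartiteGraph rate a
  obtain ⟨ε, hε, hεa⟩ := exists_pos_le_of_pos fun q : F × V => a q.1 q.2
  set δ : F → V → ℝ := fun f v => ε * p.netFlow (inl f) (inr v)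
  have hδ : ∀ f v, |δ f v| ≤ a f v := by
    intro f v
    by_cases hfv : p.netFlow (inl f) (inr v) = 0
    · simpa [δ, hfv] using hfeas.1 f v
    have hpos := (fracGraph_adj_inl_inr.mp (p.adj_of_netFlow_ne_zero hfv)).1
    calc |δ f v| = ε * |(p.netFlow (inl f) (inr v) : ℝ)| := by simp [δ, abs_mul, hε.le]
      _ ≤ ε * 1 := by gcongr; exact_mod_cast hp.isTrail.abs_netFlow_le_one _ _
      _ ≤ a f v := by simpa using hεa (f, v) hpos
  have hδ0 : δ = 0 := hfeas.eq_zero_of_abs_le hbasic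
    (fun f => by simp [δ, ← mul_sum, ← Int.cast_sum, p.sum_netFlow_inl_inr_eq_zero_right hG])
    (fun v => by simp [δ, ← mul_sum, ← Int.cast_sum, p.sum_netFlow_inl_inr_eq_zero_left hG]) hδ
  obtain ⟨f, v, hfv⟩ := hp.isTrail.exists_netFlow_inl_inr_ne_zero hG hp.not_nil
  exact hfv (by simpa [δ, hε.ne'] using congrFun₂ hδ0 f v)
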